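/- arXiv:2012.00264 — 2 statements merged into one kernel-verified Lean document; each statement's English description precedes it below -/
import Mathlib

section
/- For every integer k and n ≥ 1, one has E_{n-1}^{(k)}(1) + E_{n-1}^{(k)} = (2/n)·∑_{m=1}^{n} S_1(n,m)/m^{k-1}. -/
open Finset

noncomputable def eulerNumber : ℕ → ℝ
  | 0 => 1
  | n + 1 => -(1/2) * ∑ l ∈ (range (n+1)).attach, (((n+1).choose l.1 : ℕ) : ℝ) * eulerNumber l.1
  decreasing_by exact mem_range.mp l.2

/-- Euler polynomials `E_n(x)`, with generating function `2 e^{xt}/(e^t+1)`. -/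
noncomputable def eulerPoly (n : ℕ) (x : ℝ) : ℝ :=
  ∑ l ∈ range (n+1), (n.choose l : ℝ) * eulerNumber l * x ^ (n - l)

noncomputable def genocchiNumber : ℕ → ℝ
  | 0 => 0
  | n + 1 => (1/2) * ((if n = 0 then 2 else 0) -
      ∑ l ∈ (range (n+1)).attach, (((n+1).choose l.1 : ℕ) : ℝ) * genocchiNumber l.1)
  decreasing_by exact mem_range.mp l.2

/-- Genocchi polynomials `G_n(x)`, with generating function `2t e^{xt}/(e^t+1)`. -/
noncomputable def genocchiPoly (n : ℕ) (x : ℝ) : ℝ :=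
  ∑ l ∈ range (n+1), (n.choose l : ℝ) * genocchiNumber l * x ^ (n - l)

/-- Signed Stirling numbers of the first kind `S₁(n,m)`. -/
def stirlingS1 : ℕ → ℕ → ℤ
  | 0, 0 => 1
  | 0, _ + 1 => 0
  | _ + 1, 0 => 0
  | n + 1, j + 1 => stirlingS1 n j - n * stirlingS1 n (j + 1)

/-- Poly-Genocchi polynomials `G_n^{(k)}(x)` of index `k`, with generating function
`2 Ei_k(log(1+t)) e^{xt}/(e^t+1)`. -/
noncomputable def polyGenocchiPoly (k : ℤ) (n : ℕ) (x : ℝ) : ℝ :=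
  ∑ j ∈ Icc 1 n, (n.choose j : ℝ) *
    (∑ m ∈ Icc 1 j, (stirlingS1 j m : ℝ) / (m : ℝ) ^ (k - 1)) * eulerPoly (n - j) x

/-- Poly-Euler polynomials `E_n^{(k)}(x) = G_{n+1}^{(k)}(x)/(n+1)`. -/
noncomputable def polyEulerPoly (k : ℤ) (n : ℕ) (x : ℝ) : ℝ :=
  polyGenocchiPoly k (n + 1) x / (n + 1)

noncomputable def polyEulerNumber (k : ℤ) (n : ℕ) : ℝ := polyEulerPoly k n 0

/-- Euler function `Ē_p(x) = E_p(x - ⌊x⌋)`. -/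
noncomputable def eulerFun (p : ℕ) (x : ℝ) : ℝ := eulerPoly p (Int.fract x)

/-- Poly-Euler function `Ē_p^{(k)}(x) = E_p^{(k)}(x - ⌊x⌋)`. -/
noncomputable def polyEulerFun (k : ℤ) (p : ℕ) (x : ℝ) : ℝ := polyEulerPoly k p (Int.fract x)

/-- Dedekind type DC sum `T_p(h,m)`. -/
noncomputable def dcSum (p h m : ℕ) : ℝ :=
  2 * ∑ μ ∈ Icc 1 (m - 1), (-1 : ℝ) ^ μ * ((μ : ℝ) / m) * eulerFun p ((h * μ : ℝ) / m)

/-- Poly-Dedekind type DC sum `T_p^{(k)}(h,m)`. -/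
noncomputable def polyDC (k : ℤ) (p h m : ℕ) : ℝ :=
  2 * ∑ μ ∈ Icc 1 (m - 1), (-1 : ℝ) ^ μ * ((μ : ℝ) / m) * polyEulerFun k p ((h * μ : ℝ) / m)

lemma eulerPoly_zero' (p : ℕ) : eulerPoly p 0 = eulerNumber p := by
  unfold eulerPoly
  rw [Finset.sum_eq_single p]
  · simp
  · intro l hl hne
    have hl' := Finset.mem_range.mp hl
    have h0 : p - l ≠ 0 := by omega
    simp [zero_pow h0]
  · intro h; exact absurd (Finset.self_mem_range_succ p) h

lemma eulerPoly_one_add (p : ℕ) :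
    eulerPoly p 1 + eulerPoly p 0 = if p = 0 then 2 else 0 := by
  cases p with
  | zero => norm_num [eulerPoly, eulerNumber]
  | succ n =>
    rw [eulerPoly_zero']
    have h1 : eulerPoly (n+1) 1 =
        ∑ l ∈ range (n+2), ((n+1).choose l : ℝ) * eulerNumber l := by
      unfold eulerPoly; simp
    have h2 : eulerNumber (n+1) =
        -(1/2) * ∑ l ∈ range (n+1), ((n+1).choose l : ℝ) * eulerNumber l := by
      rw [eulerNumber]
      congr 1
      rw [← Finset.sum_attach (range (n+1)) (fun l => ((n+1).choose l : ℝ) * eulerNumber l)]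
    rw [h1, Finset.sum_range_succ]
    simp only [Nat.succ_ne_zero, if_false, Nat.choose_self, Nat.cast_one, one_mul]
    linarith [h2]

theorem stmt3 (k : ℤ) (n : ℕ) (hn : 1 ≤ n) :
    polyEulerPoly k (n - 1) 1 + polyEulerNumber k (n - 1) =
      (2 / (n : ℝ)) * ∑ m ∈ Icc 1 n, (stirlingS1 n m : ℝ) / (m : ℝ) ^ (k - 1) := by
  obtain ⟨p, rfl⟩ : ∃ p, n = p + 1 := ⟨n - 1, by omega⟩
  have key : polyGenocchiPoly k (p+1) 1 + polyGenocchiPoly k (p+1) 0 =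
      2 * ∑ m ∈ Icc 1 (p+1), (stirlingS1 (p+1) m : ℝ) / (m : ℝ) ^ (k - 1) := by
    unfold polyGenocchiPoly
    rw [← Finset.sum_add_distrib, Finset.sum_eq_single (p+1)]
    · simp only [Nat.choose_self, Nat.cast_one, one_mul, Nat.sub_self]
      have h0 : eulerPoly 0 1 = 1 := by simp [eulerPoly, eulerNumber]
      have h1 : eulerPoly 0 0 = 1 := by simp [eulerPoly, eulerNumber]
      rw [h0, h1]; ring
    · intro j hj hne
      have hj' := Finset.mem_Icc.mp hj
      have h0 : p + 1 - j ≠ 0 := by omega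
      have h := eulerPoly_one_add (p+1-j)
      rw [if_neg h0] at h
      linear_combination (((p+1).choose j : ℝ) *
        (∑ m ∈ Icc 1 j, (stirlingS1 j m : ℝ) / (m : ℝ) ^ (k - 1))) * h
    · intro h
      exact absurd (Finset.mem_Icc.mpr ⟨by omega, le_refl _⟩) h
  simp only [polyEulerNumber, polyEulerPoly, Nat.add_sub_cancel]
  have hp : ((p:ℝ) + 1) ≠ 0 := by positivity
  push_cast at key ⊢
  field_simp
  linarith [key]
end

section
/- For n ≥ 0, any integer k, and any odd positive integer m, G_n^{(k)}(x) = ∑_{l=0}^{n} C(n,l) m^{l-1} ∑_{j=1}^{n-l+1} ∑_{s=0}^{m-1} (-1)^s G_l((s+x)/m) · (1/j^{k-1}) · S_1(n-l+1,j)/(n-l+1), where G_l(x) are the ordinary Genocchi polynomials. -/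
open Finset

lemma euler_sum (n : ℕ) :
    ∑ l ∈ range (n+1), (((n+1).choose l : ℕ) : ℝ) * eulerNumber l = -2 * eulerNumber (n+1) := by
  rw [eulerNumber, ← Finset.sum_attach (range (n+1)) (fun l => (((n+1).choose l : ℕ) : ℝ) * eulerNumber l)]
  ring

lemma genocchi_sum (n : ℕ) :
    genocchiNumber (n+1) = (1/2) * ((if n = 0 then 2 else 0) -
      ∑ l ∈ range (n+1), (((n+1).choose l : ℕ) : ℝ) * genocchiNumber l) := by
  rw [genocchiNumber, ← Finset.sum_attach (range (n+1)) (fun l => (((n+1).choose l : ℕ) : ℝ) * genocchiNumber l)]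

lemma euler_choose_sum (q : ℕ) :
    ∑ j ∈ range (q+1), (q.choose j : ℝ) * eulerNumber j
      = (if q = 0 then 2 else 0) - eulerNumber q := by
  cases q with
  | zero => norm_num [eulerNumber]
  | succ n =>
    rw [Finset.sum_range_succ, euler_sum]
    simp
    ring

lemma genocchi_euler (n : ℕ) : genocchiNumber (n+1) = (n+1) * eulerNumber n := by
  induction n using Nat.strong_induction_on with
  | _ n ih =>
    cases n with
    | zero =>
      rw [genocchi_sum]
      norm_num [genocchiNumber, eulerNumber]
    | succ m =>
      rw [genocchi_sum]
      have h1 : ∑ l ∈ range (m+2), (((m+2).choose l : ℕ) : ℝ) * genocchiNumber l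
          = ((m:ℝ)+2) * ∑ l ∈ range (m+1), (((m+1).choose l : ℕ) : ℝ) * eulerNumber l := by
        rw [Finset.sum_range_succ', Finset.mul_sum]
        rw [show genocchiNumber 0 = 0 by rw [genocchiNumber]]
        simp only [mul_zero, add_zero]
        apply Finset.sum_congr rfl
        intro l hl
        rw [ih l (by simpa using hl)]
        have h2 : ((m+2).choose (l+1) * (l+1) : ℕ) = ((m+2) * (m+1).choose l : ℕ) :=
          (Nat.add_one_mul_choose_eq (m+1) l).symm
        calc ((m+2).choose (l+1) : ℝ) * (((l:ℝ)+1) * eulerNumber l)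
            = (((m+2).choose (l+1) * (l+1) : ℕ) : ℝ) * eulerNumber l := by push_cast; ring
          _ = (((m+2) * (m+1).choose l : ℕ) : ℝ) * eulerNumber l := by rw [h2]
          _ = ((m:ℝ)+2) * (((m+1).choose l : ℝ) * eulerNumber l) := by push_cast; ring
      rw [h1, euler_sum]
      simp
      ring

lemma tri_choose (p j r : ℕ) (hj : j ≤ p) :
    p.choose j * (p-j).choose r = p.choose r * (p-r).choose j := by
  by_cases h : j + r ≤ p
  · have h1 := Nat.choose_mul (n := p) (show j ≤ j + r by omega)
    have h2 := Nat.choose_mul (n := p) (show r ≤ j + r by omega)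
    have h3 : (j+r).choose j = (j+r).choose r := by
      rw [← Nat.choose_symm (show j ≤ j + r by omega)]
      congr 1
      omega
    rw [show j + r - j = r by omega] at h1
    rw [show j + r - r = j by omega] at h2
    calc p.choose j * (p-j).choose r = p.choose (j+r) * (j+r).choose j := h1.symm
      _ = p.choose (j+r) * (j+r).choose r := by rw [h3]
      _ = p.choose r * (p-r).choose j := h2
  · rw [Nat.choose_eq_zero_of_lt (show p - j < r by omega), mul_zero]
    by_cases hr : r ≤ p
    · rw [Nat.choose_eq_zero_of_lt (show p - r < j by omega), mul_zero]
    · rw [Nat.choose_eq_zero_of_lt (show p < r by omega), zero_mul]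

lemma eulerPoly_reflect (p : ℕ) (x : ℝ) :
    eulerPoly p x = ∑ r ∈ range (p+1), (p.choose r : ℝ) * eulerNumber (p - r) * x ^ r := by
  rw [eulerPoly, ← Finset.sum_range_reflect]
  apply Finset.sum_congr rfl
  intro r hr
  have hr' : r ≤ p := by simpa [Nat.lt_succ_iff] using hr
  rw [show p + 1 - 1 - r = p - r by omega, Nat.choose_symm hr', show p - (p - r) = r by omega]

lemma euler_add_one (p : ℕ) (x : ℝ) :
    eulerPoly p (x + 1) + eulerPoly p x = 2 * x ^ p := by
  have hpow : ∀ q, q ≤ p → (x+1)^q = ∑ r ∈ range (p+1), (q.choose r : ℝ) * x ^ r := by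
    intro q hq
    rw [add_pow]
    rw [← Finset.sum_subset (Finset.range_subset_range.mpr (show q+1 ≤ p+1 by omega))
      (fun r _ hr => by
        rw [Nat.choose_eq_zero_of_lt (by simp at hr ⊢; omega)]
        simp)]
    apply Finset.sum_congr rfl
    intro r hr
    ring
  have h1 : eulerPoly p (x+1)
      = ∑ r ∈ range (p+1), (p.choose r : ℝ) *
          (((if p - r = 0 then 2 else 0) - eulerNumber (p - r)) * x ^ r) := by
    rw [eulerPoly]
    have : ∀ j ∈ range (p+1), (p.choose j : ℝ) * eulerNumber j * (x+1) ^ (p - j)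
        = ∑ r ∈ range (p+1), (p.choose j : ℝ) * eulerNumber j * ((((p-j).choose r : ℝ)) * x ^ r) := by
      intro j hj
      rw [hpow (p - j) (by omega), Finset.mul_sum]
    rw [Finset.sum_congr rfl this, Finset.sum_comm]
    apply Finset.sum_congr rfl
    intro r hr
    have hr' : r ≤ p := by simpa [Nat.lt_succ_iff] using hr
    have step : ∀ j ∈ range (p+1), (p.choose j : ℝ) * eulerNumber j * (((p-j).choose r : ℝ) * x ^ r)
        = (p.choose r : ℝ) * x ^ r * (((p-r).choose j : ℝ) * eulerNumber j) := by
      intro j hj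
      have hj' : j ≤ p := by simpa [Nat.lt_succ_iff] using hj
      have := tri_choose p j r hj'
      have hc : (p.choose j : ℝ) * ((p-j).choose r : ℝ) = (p.choose r : ℝ) * ((p-r).choose j : ℝ) := by
        exact_mod_cast congrArg (Nat.cast : ℕ → ℝ) this
      linear_combination eulerNumber j * x ^ r * hc
    rw [Finset.sum_congr rfl step, ← Finset.mul_sum]
    have hshrink : ∑ j ∈ range (p+1), ((p-r).choose j : ℝ) * eulerNumber j
        = ∑ j ∈ range (p-r+1), ((p-r).choose j : ℝ) * eulerNumber j := by
      rw [← Finset.sum_subset (Finset.range_subset_range.mpr (show p-r+1 ≤ p+1 by omega))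
        (fun j _ hj => by
          rw [Nat.choose_eq_zero_of_lt (by simp at hj ⊢; omega)]
          simp)]
    rw [hshrink, euler_choose_sum]
    ring
  rw [h1, eulerPoly_reflect, ← Finset.sum_add_distrib]
  rw [Finset.sum_congr rfl (fun r hr => by ring_nf :
    ∀ r ∈ range (p+1), (p.choose r : ℝ) * (((if p - r = 0 then 2 else 0) - eulerNumber (p - r)) * x ^ r)
      + (p.choose r : ℝ) * eulerNumber (p - r) * x ^ r
      = (p.choose r : ℝ) * (if p - r = 0 then (2:ℝ) else 0) * x ^ r)]
  rw [Finset.sum_eq_single p (fun r hr hrp => by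
        have : ¬ (p - r = 0) := by simp at hr; omega
        simp [this])
      (fun h => by simp at h)]
  simp

lemma poly_zero_of_antiperiodic (Q : Polynomial ℝ) (h : ∀ x : ℝ, Q.eval (x + 1) = -Q.eval x) :
    Q = 0 := by
  have hc : Q.comp (Polynomial.X + Polynomial.C 1) = -Q := by
    apply Polynomial.funext
    intro r
    simp only [Polynomial.eval_comp, Polynomial.eval_add, Polynomial.eval_X, Polynomial.eval_C,
      Polynomial.eval_neg]
    exact h r
  by_cases hQ : Q = 0
  · exact hQ
  · exfalso
    have hdeg : (Polynomial.X + Polynomial.C (1:ℝ)).natDegree ≠ 0 := by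
      rw [Polynomial.natDegree_X_add_C]; omega
    have hlc := Polynomial.leadingCoeff_comp (p := Q) hdeg
    rw [hc] at hlc
    have hmon : (Polynomial.X + Polynomial.C (1:ℝ)).leadingCoeff = 1 :=
      (Polynomial.monic_X_add_C 1)
    rw [hmon, one_pow, mul_one, Polynomial.leadingCoeff_neg] at hlc
    have : Q.leadingCoeff = 0 := by linarith
    exact hQ (Polynomial.leadingCoeff_eq_zero.mp this)

noncomputable def EP (p : ℕ) : Polynomial ℝ :=
  ∑ l ∈ range (p+1), Polynomial.C ((p.choose l : ℝ) * eulerNumber l) * Polynomial.X ^ (p - l)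

lemma EP_eval (p : ℕ) (x : ℝ) : (EP p).eval x = eulerPoly p x := by
  simp [EP, eulerPoly, Polynomial.eval_finset_sum]

lemma euler_mult {m : ℕ} (hm : Odd m) (p : ℕ) (x : ℝ) :
    eulerPoly p x = (m:ℝ)^p * ∑ s ∈ range m, (-1:ℝ)^s * eulerPoly p (((s:ℝ) + x)/m) := by
  have hm1 : 1 ≤ m := by
    rcases Nat.eq_zero_or_pos m with h | h
    · subst h; simp [Nat.odd_iff] at hm
    · exact h
  have hm0 : (m:ℝ) ≠ 0 := by positivity
  set Q : Polynomial ℝ := EP p - Polynomial.C ((m:ℝ)^p) *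
    ∑ s ∈ range m, Polynomial.C ((-1:ℝ)^s) *
      (EP p).comp (Polynomial.C ((s:ℝ)/m) + Polynomial.C (1/(m:ℝ)) * Polynomial.X) with hQdef
  have hev : ∀ y : ℝ, Q.eval y
      = eulerPoly p y - (m:ℝ)^p * ∑ s ∈ range m, (-1:ℝ)^s * eulerPoly p (((s:ℝ) + y)/m) := by
    intro y
    rw [hQdef]
    simp only [Polynomial.eval_sub, Polynomial.eval_mul, Polynomial.eval_C,
      Polynomial.eval_finset_sum, Polynomial.eval_comp, Polynomial.eval_add,
      Polynomial.eval_X, EP_eval]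
    congr 1
    congr 1
    apply Finset.sum_congr rfl
    intro s hs
    congr 2
    field_simp
  have key : ∀ y : ℝ, Q.eval (y + 1) = -Q.eval y := by
    intro y
    rw [hev, hev]
    set g : ℕ → ℝ := fun t => (-1:ℝ)^t * eulerPoly p (((t:ℝ) + y)/m) with hg
    have hshift : ∑ s ∈ range m, (-1:ℝ)^s * eulerPoly p (((s:ℝ) + (y+1))/m)
        = -∑ s ∈ range m, g (s+1) := by
      rw [← Finset.sum_neg_distrib]
      apply Finset.sum_congr rfl
      intro s hs
      rw [hg]
      simp only
      rw [show ((s:ℝ) + (y+1))/m = (((s+1 : ℕ):ℝ) + y)/m by push_cast; ring]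
      push_cast
      ring
    have hsum1 : ∑ s ∈ range m, g (s+1) = (∑ s ∈ range m, g s) + g m - g 0 := by
      have := Finset.sum_range_succ' g m
      rw [Finset.sum_range_succ] at this
      linarith
    have hg0 : g 0 = eulerPoly p (y/m) := by simp [hg]
    have hgm : g m = -eulerPoly p (y/m + 1) := by
      rw [hg]
      simp only
      rw [hm.neg_one_pow]
      rw [show ((m:ℝ) + y)/m = y/m + 1 by field_simp; ring]
      ring
    have hfe := euler_add_one p (y/m)
    have hfe2 := euler_add_one p y
    rw [hshift, hsum1, hg0, hgm]
    have hdiv : ((y/m) : ℝ)^p = y^p / (m:ℝ)^p := by rw [div_pow]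
    have hmp : (m:ℝ)^p ≠ 0 := pow_ne_zero _ hm0
    field_simp at hfe ⊢
    have h3 : (m:ℝ)^p * (y/m)^p = y^p := by rw [hdiv]; field_simp
    linear_combination hfe2 - (m:ℝ)^p * hfe - 2 * h3
  have hQ0 : Q = 0 := poly_zero_of_antiperiodic Q key
  have := hev x
  rw [hQ0] at this
  simp at this
  linarith

lemma genocchiPoly_zero (x : ℝ) : genocchiPoly 0 x = 0 := by
  simp [genocchiPoly, show genocchiNumber 0 = 0 by rw [genocchiNumber]]

lemma genocchiPoly_succ (l : ℕ) (x : ℝ) :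
    genocchiPoly (l+1) x = ((l:ℝ)+1) * eulerPoly l x := by
  rw [genocchiPoly, Finset.sum_range_succ', eulerPoly, Finset.mul_sum]
  rw [show genocchiNumber 0 = 0 by rw [genocchiNumber]]
  simp only [mul_zero, zero_mul, add_zero]
  apply Finset.sum_congr rfl
  intro j hj
  rw [genocchi_euler j, show l + 1 - (j+1) = l - j from by omega]
  have h2 : ((l+1).choose (j+1) * (j+1) : ℕ) = ((l+1) * l.choose j : ℕ) :=
    (Nat.add_one_mul_choose_eq l j).symm
  calc ((l+1).choose (j+1) : ℝ) * (((j:ℝ)+1) * eulerNumber j) * x ^ (l-j)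
      = (((l+1).choose (j+1) * (j+1) : ℕ) : ℝ) * eulerNumber j * x ^ (l-j) := by push_cast; ring
    _ = (((l+1) * l.choose j : ℕ) : ℝ) * eulerNumber j * x ^ (l-j) := by rw [h2]
    _ = ((l:ℝ)+1) * ((l.choose j : ℝ) * eulerNumber j * x ^ (l-j)) := by push_cast; ring

theorem stmt9 (k : ℤ) (n m : ℕ) (hm : Odd m) (x : ℝ) :
    polyGenocchiPoly k n x =
      ∑ l ∈ range (n + 1), (n.choose l : ℝ) * (m : ℝ) ^ ((l : ℤ) - 1) *
        ∑ j ∈ Icc 1 (n - l + 1), ∑ s ∈ range m,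
          (-1 : ℝ) ^ s * genocchiPoly l (((s : ℝ) + x) / m) *
            (1 / (j : ℝ) ^ (k - 1)) * (stirlingS1 (n - l + 1) j : ℝ) / ((n - l + 1 : ℕ) : ℝ) := by
  have hm1 : 1 ≤ m := by
    rcases Nat.eq_zero_or_pos m with h | h
    · subst h; simp [Nat.odd_iff] at hm
    · exact h
  have hm0 : (m:ℝ) ≠ 0 := by positivity
  rw [Finset.sum_range_succ']
  simp only [genocchiPoly_zero, mul_zero, zero_mul, zero_div, Finset.sum_const_zero, add_zero]
  have hterm : ∀ l ∈ range n,
      (n.choose (l+1) : ℝ) * (m : ℝ) ^ (((l+1 : ℕ) : ℤ) - 1) *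
        ∑ j ∈ Icc 1 (n - (l+1) + 1), ∑ s ∈ range m,
          (-1 : ℝ) ^ s * genocchiPoly (l+1) (((s : ℝ) + x) / m) *
            (1 / (j : ℝ) ^ (k - 1)) * (stirlingS1 (n - (l+1) + 1) j : ℝ) / ((n - (l+1) + 1 : ℕ) : ℝ)
      = (n.choose (l+1) : ℝ) * (((l:ℝ)+1) * eulerPoly l x) *
          ((∑ j ∈ Icc 1 (n-l), (stirlingS1 (n-l) j : ℝ) / (j:ℝ)^(k-1)) / ((n-l : ℕ):ℝ)) := by
    intro l hl
    have hln : l < n := Finset.mem_range.mp hl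
    rw [show n - (l+1) + 1 = n - l from by omega]
    have hz : (m:ℝ) ^ (((l+1:ℕ):ℤ) - 1) = (m:ℝ) ^ (l:ℕ) := by
      rw [show ((l+1:ℕ):ℤ) - 1 = (l:ℤ) from by push_cast; ring, zpow_natCast]
    rw [hz]
    have hsplit : ∑ j ∈ Icc 1 (n-l), ∑ s ∈ range m,
        (-1 : ℝ) ^ s * genocchiPoly (l+1) (((s : ℝ) + x) / m) *
          (1 / (j : ℝ) ^ (k - 1)) * (stirlingS1 (n-l) j : ℝ) / ((n - l : ℕ) : ℝ)
        = (∑ s ∈ range m, (-1:ℝ)^s * eulerPoly l (((s:ℝ)+x)/m)) *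
            (((l:ℝ)+1) * ((∑ j ∈ Icc 1 (n-l), (stirlingS1 (n-l) j : ℝ) / (j:ℝ)^(k-1)) / ((n-l : ℕ):ℝ))) := by
      calc ∑ j ∈ Icc 1 (n-l), ∑ s ∈ range m,
          (-1 : ℝ) ^ s * genocchiPoly (l+1) (((s : ℝ) + x) / m) *
            (1 / (j : ℝ) ^ (k - 1)) * (stirlingS1 (n-l) j : ℝ) / ((n - l : ℕ) : ℝ)
          = ∑ j ∈ Icc 1 (n-l), (∑ s ∈ range m, (-1:ℝ)^s * eulerPoly l (((s:ℝ)+x)/m)) *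
              (((l:ℝ)+1) * (((stirlingS1 (n-l) j : ℝ) / (j:ℝ)^(k-1)) / ((n-l : ℕ):ℝ))) := by
            apply Finset.sum_congr rfl
            intro j hj
            rw [Finset.sum_mul]
            apply Finset.sum_congr rfl
            intro s hs
            rw [genocchiPoly_succ]
            ring
        _ = _ := by
            rw [← Finset.mul_sum, ← Finset.mul_sum, ← Finset.sum_div]
    rw [hsplit, euler_mult hm l x]
    have hml : (m:ℝ)^(l:ℕ) ≠ 0 := pow_ne_zero _ hm0
    field_simp
  rw [Finset.sum_congr rfl hterm, polyGenocchiPoly]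
  have hsub : ∑ j ∈ Icc 1 n, ((n.choose j : ℝ) * ∑ m' ∈ Icc 1 j, (stirlingS1 j m' : ℝ) / (m':ℝ)^(k-1)) * eulerPoly (n-j) x
      = ∑ j ∈ range (n+1), ((n.choose j : ℝ) * ∑ m' ∈ Icc 1 j, (stirlingS1 j m' : ℝ) / (m':ℝ)^(k-1)) * eulerPoly (n-j) x := by
    apply Finset.sum_subset
    · intro j hj
      have := Finset.mem_Icc.mp hj
      exact Finset.mem_range.mpr (by omega)
    · intro j hj hj2
      have hj0 : j = 0 := by
        simp only [Finset.mem_range] at hj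
        simp only [Finset.mem_Icc] at hj2
        omega
      subst hj0
      simp
  rw [hsub, Finset.sum_range_succ']
  have hIcc0 : Icc 1 0 = (∅ : Finset ℕ) := rfl
  simp only [hIcc0, Finset.sum_empty, mul_zero, zero_mul, add_zero]
  rw [← Finset.sum_range_reflect]
  apply Finset.sum_congr rfl
  intro i hi
  have hin : i < n := Finset.mem_range.mp hi
  rw [show n - 1 - i + 1 = n - i from by omega, show n - (n - i) = i from by omega]
  have hchoose : (n.choose (n-i) * (n-i) : ℕ) = (n.choose (i+1) * (i+1) : ℕ) := by
    rw [Nat.choose_symm (show i ≤ n by omega)]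
    exact (Nat.choose_succ_right_eq n i).symm
  have hd : ((n-i : ℕ):ℝ) ≠ 0 := Nat.cast_ne_zero.mpr (by omega)
  have hcast : (n.choose (n-i) : ℝ) * ((n-i : ℕ):ℝ) = (n.choose (i+1) : ℝ) * ((i:ℝ)+1) := by
    have h := congrArg (Nat.cast : ℕ → ℝ) hchoose
    push_cast at h
    convert h using 2
  have key : (n.choose (i+1) : ℝ) * (((i:ℝ) + 1) * eulerPoly i x) *
      ((∑ j ∈ Icc 1 (n - i), (stirlingS1 (n - i) j : ℝ) / (j:ℝ) ^ (k - 1)) / ((n-i : ℕ):ℝ))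
      = (((n.choose (i+1) : ℝ) * ((i:ℝ) + 1)) / ((n-i : ℕ):ℝ)) *
        (∑ j ∈ Icc 1 (n - i), (stirlingS1 (n - i) j : ℝ) / (j:ℝ) ^ (k - 1)) * eulerPoly i x := by
    ring
  rw [key, ← hcast, mul_div_assoc, div_self hd, mul_one]
end
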